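/- Let G be a chordal graph with clique tree T, and let a, b, c be three pairwise non-adjacent vertices. Then a is a middle of b and c (every path in G from b to c meets N(a)) if and only if for all maximal cliques Q_b containing b and Q_c containing c, some edge on the path in T between Q_b and Q_c has a label Q ∩ Q' with Q ∩ Q' ⊆ N(a). -/

import Mathlib

open SimpleGraph

variable {V : Type*}

/-- `S` separates `u` and `w` in `G`: every walk from `u` to `w` meets `S`. -/
def Separates (G : SimpleGraph V) (S : Set V) (u w : V) : Prop :=
  ∀ p : G.Walk u w, ∃ x ∈ p.support, x ∈ S

/-- `S` is a minimal `{u,w}`-separator. -/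
def IsMinUWSeparator (G : SimpleGraph V) (S : Set V) (u w : V) : Prop :=
  u ≠ w ∧ ¬ G.Adj u w ∧ u ∉ S ∧ w ∉ S ∧ Separates G S u w ∧
    ∀ S' ⊂ S, ¬ Separates G S' u w

/-- `S` is a minimal separator of `G`. -/
def IsMinSeparator (G : SimpleGraph V) (S : Set V) : Prop :=
  ∃ u w : V, IsMinUWSeparator G S u w

/-- A vertex is simplicial if its neighborhood is a clique. -/
def IsSimplicial (G : SimpleGraph V) (v : V) : Prop :=
  G.IsClique (G.neighborSet v)

/-- A maximal clique (as a vertex set). -/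
def IsMaxClique (G : SimpleGraph V) (s : Set V) : Prop :=
  G.IsClique s ∧ ∀ t : Set V, G.IsClique t → s ⊆ t → s = t

/-- A graph is chordal if it has no induced cycle of length at least 4. -/
def Chordal (G : SimpleGraph V) : Prop :=
  ∀ n : ℕ, 4 ≤ n → IsEmpty (SimpleGraph.cycleGraph n ↪g G)

/-- The type of maximal cliques of `G`. -/
abbrev MaxCliques (G : SimpleGraph V) := {s : Set V // IsMaxClique G s}

/-- `T` is a clique tree of `G`: a tree on the maximal cliques such that for each vertex
the cliques containing it induce a connected subgraph. -/
def IsCliqueTree (G : SimpleGraph V) (T : SimpleGraph (MaxCliques G)) : Prop :=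
  T.IsTree ∧ ∀ v : V, (T.induce {Q : MaxCliques G | v ∈ Q.1}).Connected

/-- The set `X` induces a path in `T` (assuming `T` is a tree: connected with max degree 2). -/
def InducesPath {α : Type*} (T : SimpleGraph α) (X : Set α) : Prop :=
  (T.induce X).Connected ∧ ∀ x : X, ((T.induce X).neighborSet x).ncard ≤ 2

/-- `T` is a clique path tree of `G`. -/
def IsCliquePathTree (G : SimpleGraph V) (T : SimpleGraph (MaxCliques G)) : Prop :=
  T.IsTree ∧ ∀ v : V, InducesPath T {Q : MaxCliques G | v ∈ Q.1}

/-- `G` is a path graph: the empty graph, or a graph admitting a clique path tree. -/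
def IsPathGraph (G : SimpleGraph V) : Prop :=
  IsEmpty V ∨ ∃ T : SimpleGraph (MaxCliques G), IsCliquePathTree G T

/-- `G` is an interval graph: intersection graph of closed real intervals. -/
def IsIntervalGraph (G : SimpleGraph V) : Prop :=
  ∃ f : V → Set ℝ, (∀ v, ∃ a b : ℝ, a ≤ b ∧ f v = Set.Icc a b) ∧
    ∀ u v : V, u ≠ v → (G.Adj u v ↔ (f u ∩ f v).Nonempty)

/-- `a` is a middle of `b, c`: every walk from `b` to `c` meets `N(a)`. -/
def IsMiddle (G : SimpleGraph V) (a b c : V) : Prop :=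
  ∀ p : G.Walk b c, ∃ x ∈ p.support, G.Adj a x

/-- `a, b, c` form an asteroidal triple. -/
def AsteroidalTriple (G : SimpleGraph V) (a b c : V) : Prop :=
  a ≠ b ∧ a ≠ c ∧ b ≠ c ∧ ¬ G.Adj a b ∧ ¬ G.Adj a c ∧ ¬ G.Adj b c ∧
  (∃ p : G.Walk b c, ∀ x ∈ p.support, ¬ G.Adj a x) ∧
  (∃ p : G.Walk a c, ∀ x ∈ p.support, ¬ G.Adj b x) ∧
  (∃ p : G.Walk a b, ∀ x ∈ p.support, ¬ G.Adj c x)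

/-- The closed neighborhood clique `Q_v` of a simplicial vertex. -/
def Qv (G : SimpleGraph V) (v : V) : Set V := insert v (G.neighborSet v)

/-- `S_v`: the vertices of `Q_v` having a neighbor outside `Q_v`. -/
def Sv (G : SimpleGraph V) (v : V) : Set V :=
  {x | x ∈ Qv G v ∧ ∃ y, y ∉ Qv G v ∧ G.Adj x y}

/-- A simplicial vertex is special if `S_v` is an inclusion-maximal minimal separator. -/
def IsSpecial (G : SimpleGraph V) (v : V) : Prop :=
  IsSimplicial G v ∧ IsMinSeparator G (Sv G v) ∧
    ∀ S : Set V, IsMinSeparator G S → Sv G v ⊆ S → S = Sv G v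

/-- Connected components of `G ∖ S` containing a vertex complete to `S`. -/
def CompleteComponents (G : SimpleGraph V) (S : Set V) :
    Set ((G.induce (Sᶜ : Set V)).ConnectedComponent) :=
  {C | ∃ x : (Sᶜ : Set V), (G.induce (Sᶜ : Set V)).connectedComponentMk x = C ∧
        S ⊆ G.neighborSet x.1}

/-- The wheel graph: an `n`-cycle plus a universal vertex (`none`). -/
def wheelGraph (n : ℕ) : SimpleGraph (Option (Fin n)) :=
  SimpleGraph.fromRel (fun a b =>
    (∃ i j : Fin n, a = some i ∧ b = some j ∧ (SimpleGraph.cycleGraph n).Adj i j) ∨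
    (a = none ∧ b ≠ none))

/-- `y` lies on the tree-path between `x` and `z` in `T`. -/
def OnTreePath {α : Type*} (T : SimpleGraph α) (x y z : α) : Prop :=
  ∃ p : T.Walk x z, p.IsPath ∧ y ∈ p.support

/-! Removing an edge `QQ'` of `T[Q_b, Q_c]` separates `Q_b` from `Q_c` in the tree, and a walk
of `G` missing the label `Q ∩ Q'` never crosses that edge, since the cliques containing a fixed
vertex form a subtree. So `N(a)` meets every `b`–`c` walk as soon as some label on the path is
contained in `N(a)`. Conversely, if no label on the path lies in `N(a)`, consecutive cliques of
the path share a vertex outside `N(a)`, and chaining these vertices through the cliques yields a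
`b`–`c` walk avoiding `N(a)`. -/

lemma exists_maxCliques_superset [Finite V] (G : SimpleGraph V) {s : Set V}
    (hs : G.IsClique s) : ∃ M : MaxCliques G, s ⊆ M.1 := by
  obtain ⟨M, ⟨hM, hsM⟩, hmax⟩ :=
    Set.Finite.exists_maximalFor id {t : Set V | G.IsClique t ∧ s ⊆ t} (Set.toFinite _)
      ⟨s, hs, subset_rfl⟩
  exact ⟨⟨M, hM, fun t ht hMt => le_antisymm hMt (hmax ⟨ht, hsM.trans hMt⟩ hMt)⟩, hsM⟩

lemma SimpleGraph.IsAcyclic.not_reachable_deleteEdges_of_mem_edges {α : Type*}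
    {T : SimpleGraph α} (hT : T.IsAcyclic) {u v : α} {p : T.Walk u v} (hp : p.IsPath)
    {e : Sym2 α} (he : e ∈ p.edges) : ¬ (T.deleteEdges {e}).Reachable u v := by
  classical
  rintro ⟨q⟩
  have hq : (q.bypass.mapLe (T.deleteEdges_le {e})).IsPath := q.bypass_isPath.mapLe _
  have hpq : p = q.bypass.mapLe (T.deleteEdges_le {e}) :=
    congrArg Subtype.val ((hT.subsingleton_path u v).elim ⟨p, hp⟩ ⟨_, hq⟩)
  rw [hpq, Walk.edges_mapLe_eq_edges] at he
  simpa using q.bypass.edges_subset_edgeSet he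

namespace IsCliqueTree

variable {G : SimpleGraph V} {T : SimpleGraph (MaxCliques G)} {Q Q' R R' : MaxCliques G}

lemma reachable_deleteEdges_of_mem (hT : IsCliqueTree G T) {x : V} (hx : x ∉ Q.1 ∩ Q'.1)
    (hR : x ∈ R.1) (hR' : x ∈ R'.1) : (T.deleteEdges {s(Q, Q')}).Reachable R R' := by
  obtain ⟨q⟩ := (hT.2 x).preconnected ⟨R, hR⟩ ⟨R', hR'⟩
  refine ⟨(q.map (Embedding.induce _).toHom).toDeleteEdges _ ?_⟩
  intro e he
  obtain ⟨e', -, rfl⟩ := List.mem_map.mp (Walk.edges_map _ q ▸ he)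
  induction e' using Sym2.ind with
  | _ A B =>
    simp only [Sym2.map_mk, Set.mem_singleton_iff, Sym2.eq_iff]
    rintro (⟨rfl, rfl⟩ | ⟨rfl, rfl⟩)
    · exact hx ⟨A.2, B.2⟩
    · exact hx ⟨B.2, A.2⟩

lemma reachable_deleteEdges_of_walk [Finite V] (hT : IsCliqueTree G T) {x y : V}
    (w : G.Walk x y) (hw : ∀ v ∈ w.support, v ∉ Q.1 ∩ Q'.1) (hR : x ∈ R.1)
    (hR' : y ∈ R'.1) :
    (T.deleteEdges {s(Q, Q')}).Reachable R R' := by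
  induction w generalizing R with
  | nil => exact hT.reachable_deleteEdges_of_mem (hw _ (by simp)) hR hR'
  | @cons u z v h p ih =>
    obtain ⟨M, hM⟩ := exists_maxCliques_superset G (isClique_pair.mpr fun _ => h)
    exact (hT.reachable_deleteEdges_of_mem (hw u (by simp)) hR (hM (by simp))).trans
      (ih (fun t ht => hw t (by simp [ht])) (hM (by simp)) hR')

end IsCliqueTree

lemma SimpleGraph.IsClique.exists_walk_of_mem_of_walk {G : SimpleGraph V} {s : Set V}
    (hs : G.IsClique s) {P : V → Prop} {u x c : V} (hu : u ∈ s) (hx : x ∈ s) (hPu : P u)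
    (w : G.Walk x c) (hw : ∀ y ∈ w.support, P y) :
    ∃ w' : G.Walk u c, ∀ y ∈ w'.support, P y := by
  by_cases hux : u = x
  · subst hux
    exact ⟨w, hw⟩
  · exact ⟨.cons (hs hu hx hux) w, by simpa [Walk.support_cons] using ⟨hPu, hw⟩⟩

lemma exists_walk_avoiding_neighborSet_of_labels_not_subset {G : SimpleGraph V}
    {T : SimpleGraph (MaxCliques G)} {a c : V} (hac : ¬ G.Adj a c) {Q Qc : MaxCliques G}
    (p : T.Walk Q Qc) (hc : c ∈ Qc.1)
    (hp : ∀ A B : MaxCliques G, s(A, B) ∈ p.edges → ¬ A.1 ∩ B.1 ⊆ G.neighborSet a)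
    {u : V} (hu : u ∈ Q.1) (hau : ¬ G.Adj a u) :
    ∃ w : G.Walk u c, ∀ x ∈ w.support, ¬ G.Adj a x := by
  induction p generalizing u with
  | @nil Q => exact Q.2.1.exists_walk_of_mem_of_walk hu hc hau .nil (by simpa using hac)
  | @cons Q Q₁ Qc h q ih =>
    obtain ⟨x, ⟨hxQ, hxQ₁⟩, hax⟩ := Set.not_subset.mp (hp Q Q₁ (by simp))
    obtain ⟨w, hw⟩ := ih hc (fun A B hAB => hp A B (by simp [hAB])) hxQ₁ hax
    exact Q.2.1.exists_walk_of_mem_of_walk hu hxQ hau w hw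

theorem stmt13_general [Fintype V] (G : SimpleGraph V)
    (T : SimpleGraph (MaxCliques G)) (hT : IsCliqueTree G T) (a b c : V)
    (hab : ¬ G.Adj a b) (hac : ¬ G.Adj a c) :
    IsMiddle G a b c ↔
      ∀ Qb Qc : MaxCliques G, b ∈ Qb.1 → c ∈ Qc.1 →
        ∀ p : T.Walk Qb Qc, p.IsPath →
          ∃ Q Q' : MaxCliques G, s(Q, Q') ∈ p.edges ∧ Q.1 ∩ Q'.1 ⊆ G.neighborSet a := by
  constructor
  · intro hmid Qb Qc hb hc p _
    by_contra! hlabels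
    obtain ⟨w, hw⟩ :=
      exists_walk_avoiding_neighborSet_of_labels_not_subset hac p hc hlabels hb hab
    obtain ⟨x, hx, hax⟩ := hmid w
    exact hw x hx hax
  · intro hlabels w
    obtain ⟨Qb, hb⟩ := exists_maxCliques_superset G (G.isClique_singleton b)
    obtain ⟨Qc, hc⟩ := exists_maxCliques_superset G (G.isClique_singleton c)
    obtain ⟨p, hp⟩ := (hT.1.connected.preconnected Qb Qc).some.toPath
    obtain ⟨Q, Q', he, hsub⟩ := hlabels Qb Qc (hb rfl) (hc rfl) p hp
    by_contra! hw
    exact hT.1.isAcyclic.not_reachable_deleteEdges_of_mem_edges hp he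
      (hT.reachable_deleteEdges_of_walk w (fun v hv hvQ => hw v hv (hsub hvQ)) (hb rfl) (hc rfl))

theorem stmt13 [Fintype V] (G : SimpleGraph V) (hG : Chordal G)
    (T : SimpleGraph (MaxCliques G)) (hT : IsCliqueTree G T) (a b c : V)
    (hab : ¬ G.Adj a b) (hac : ¬ G.Adj a c) (hbc : ¬ G.Adj b c)
    (hab' : a ≠ b) (hac' : a ≠ c) (hbc' : b ≠ c) :
    IsMiddle G a b c ↔
      ∀ Qb Qc : MaxCliques G, b ∈ Qb.1 → c ∈ Qc.1 →
        ∀ p : T.Walk Qb Qc, p.IsPath →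
          ∃ Q Q' : MaxCliques G, s(Q, Q') ∈ p.edges ∧ Q.1 ∩ Q'.1 ⊆ G.neighborSet a :=
  stmt13_general G T hT a b c hab hac
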